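/- For the fusion ring of C(so₅,3/2)_ad with fusion matrices N₀,…,N₅ as given, the assignment X₀ ↦ 1, X₁, X₂, X₅ ↦ u₂, X₃ ↦ u₁u₂, X₄ ↦ u₁⁻¹u₂² (with u₁ = 2cos(π/9)² - 2, u₂ = 1 - ζ₉⁴ - ζ₉⁵ real) is a ring homomorphism to R, i.e., dᵢ dⱼ = Σ_k (Nᵢ)_{j,k} d_k for all i, j, and each dᵢ is the largest eigenvalue of Nᵢ. -/

import Mathlib

/-! Write `γ = cos(π/9)`; the triple-angle formula gives `8γ³ - 6γ - 1 = 0`, and modulo this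
cubic every `dᵢ` is a polynomial of degree at most two in `γ`, so each fusion rule is a
polynomial identity modulo the cubic. Thus `d` is a positive eigenvector of every `Nᵢ` with
eigenvalue `dᵢ`, and since `Nᵢ` is symmetric it is a left eigenvector as well. For a nonnegative
matrix with a positive left eigenvector, pairing `|μ| |v| ≤ Nᵢ |v|` against that eigenvector bounds
every real eigenvalue `μ` by the eigenvalue of the positive one. -/

noncomputable section

/-- The fusion matrices `N₀, …, N₅` of `C(so₅, 3/2)_ad`. -/
def N : Fin 6 → Matrix (Fin 6) (Fin 6) ℤ :=
  ![!![1,0,0,0,0,0; 0,1,0,0,0,0; 0,0,1,0,0,0; 0,0,0,1,0,0; 0,0,0,0,1,0; 0,0,0,0,0,1],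
    !![0,1,0,0,0,0; 1,0,1,1,0,0; 0,1,0,0,1,0; 0,1,0,1,1,0; 0,0,1,1,1,1; 0,0,0,0,1,1],
    !![0,0,1,0,0,0; 0,1,0,0,1,0; 1,0,0,1,0,1; 0,0,1,1,1,0; 0,1,0,1,1,1; 0,0,1,0,1,0],
    !![0,0,0,1,0,0; 0,1,0,1,1,0; 0,0,1,1,1,0; 1,1,1,1,1,1; 0,1,1,1,2,1; 0,0,0,1,1,1],
    !![0,0,0,0,1,0; 0,0,1,1,1,1; 0,1,0,1,1,1; 0,1,1,1,2,1; 1,1,1,2,2,1; 0,1,1,1,1,0],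
    !![0,0,0,0,0,1; 0,0,0,0,1,1; 0,0,1,0,1,0; 0,0,0,1,1,1; 0,1,1,1,1,0; 1,1,0,1,0,0]]

/-- The unit `u₁ = (2cos(π/9))² - 2` of `Q(ζ₉)⁺` in its real embedding. -/
def r1 : ℝ := (2 * Real.cos (Real.pi / 9)) ^ 2 - 2

/-- The unit `u₂ = 1 - ζ₉⁴ - ζ₉⁵ = 1 - 2cos(8π/9)` of `Q(ζ₉)⁺` in its real embedding. -/
def r2 : ℝ := 1 - 2 * Real.cos (8 * Real.pi / 9)

/-- The Frobenius–Perron dimensions: `d₀ = 1`, `d₁ = d₂ = d₅ = u₂`, `d₃ = u₁u₂`,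
`d₄ = u₁⁻¹u₂²`. -/
def d : Fin 6 → ℝ := ![1, r2, r2, r1 * r2, r1⁻¹ * r2 ^ 2, r2]

/-- The fusion matrices over `ℝ`. -/
def NR (i : Fin 6) : Matrix (Fin 6) (Fin 6) ℝ := (N i).map Int.cast

open Matrix Real

theorem abs_le_of_mulVec_eq_smul_of_vecMul_eq_smul {n : Type*} [Fintype n]
    {A : Matrix n n ℝ} (hA : ∀ i j, 0 ≤ A i j) {w : n → ℝ} (hw : ∀ i, 0 < w i) {r : ℝ}
    (hwA : w ᵥ* A = r • w) {μ : ℝ} {v : n → ℝ} (hv : v ≠ 0) (hAv : A *ᵥ v = μ • v) :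
    |μ| ≤ r := by
  set a : n → ℝ := fun i => |v i|
  have ha : 0 ≤ a := fun i => abs_nonneg (v i)
  have hrow : |μ| • a ≤ A *ᵥ a := fun i => calc
    |μ| * |v i| = |(A *ᵥ v) i| := by rw [hAv, Pi.smul_apply, smul_eq_mul, abs_mul]
    _ ≤ ∑ j, |A i j * v j| := Finset.abs_sum_le_sum_abs _ _
    _ = (A *ᵥ a) i := by simp only [abs_mul, abs_of_nonneg (hA i _)]; rfl
  have hpos : 0 < w ⬝ᵥ a := by
    obtain ⟨k, hk⟩ := Function.ne_iff.mp hv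
    exact Finset.sum_pos' (fun j _ => mul_nonneg (hw j).le (ha j))
      ⟨k, Finset.mem_univ k, mul_pos (hw k) (abs_pos.mpr hk)⟩
  refine le_of_mul_le_mul_right ?_ hpos
  calc |μ| * (w ⬝ᵥ a) = w ⬝ᵥ (|μ| • a) := by rw [dotProduct_smul, smul_eq_mul]
    _ ≤ w ⬝ᵥ (A *ᵥ a) := dotProduct_le_dotProduct_of_nonneg_left hrow (fun i => (hw i).le)
    _ = r * (w ⬝ᵥ a) := by rw [dotProduct_mulVec, hwA, smul_dotProduct, smul_eq_mul]

local notation "γ" => Real.cos (π / 9)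

lemma cos_pi_div_nine_cubic : 8 * γ ^ 3 - 6 * γ - 1 = 0 := by
  have h := cos_three_mul (π / 9)
  rw [show 3 * (π / 9) = π / 3 by ring, cos_pi_div_three] at h
  linarith

lemma half_lt_cos_pi_div_nine : 1 / 2 < γ := by
  rw [← cos_pi_div_three]
  apply cos_lt_cos_of_nonneg_of_le_pi <;> linarith [pi_pos]

lemma d_eq : d = ![1, 1 + 2 * γ, 1 + 2 * γ, 4 * γ ^ 2 + 2 * γ - 1, 4 * γ ^ 2 + 2 * γ,
    1 + 2 * γ] := by
  have hc := cos_pi_div_nine_cubic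
  have hr2 : r2 = 1 + 2 * γ := by
    rw [r2, show 8 * π / 9 = π - π / 9 by ring, cos_pi_sub]; ring
  have hr1 : r1 = 4 * γ ^ 2 - 2 := by rw [r1]; ring
  have hr1_ne : r1 ≠ 0 := by
    -- `4γ² = 2` would turn the cubic into `γ = -1/2`
    intro h
    nlinarith [half_lt_cos_pi_div_nine]
  have hd3 : r1 * r2 = 4 * γ ^ 2 + 2 * γ - 1 := by
    rw [hr1, hr2]; linear_combination hc
  have hd4 : r1⁻¹ * r2 ^ 2 = 4 * γ ^ 2 + 2 * γ := by
    rw [inv_mul_eq_div, div_eq_iff hr1_ne, hr1, hr2]; linear_combination (-2 * γ - 1) * hc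
  rw [d, hd3, hd4, hr2]

lemma d_pos (k : Fin 6) : 0 < d k := by
  have hc := half_lt_cos_pi_div_nine
  rw [d_eq]
  fin_cases k <;> simp <;> nlinarith

lemma d_mul_d (i j : Fin 6) : d i * d j = ∑ k : Fin 6, (N i j k : ℝ) * d k := by
  have hc := cos_pi_div_nine_cubic
  -- each difference of the two sides is a linear polynomial in `γ` times the cubic
  fin_cases i <;> fin_cases j <;> simp [d_eq, N, Fin.sum_univ_six] <;>
    first
      | ring1
      | linear_combination (2 * γ) * hc
      | linear_combination (2 * γ + 1) * hc
      | linear_combination (2 * γ + 2) * hc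
      | linear_combination (2 * γ + 3) * hc
      | linear_combination hc

lemma N_isSymm (i : Fin 6) : (N i).IsSymm := by
  fin_cases i <;> decide

lemma N_nonneg (i j k : Fin 6) : 0 ≤ N i j k := by
  fin_cases i <;> fin_cases j <;> fin_cases k <;> decide

lemma NR_nonneg (i j k : Fin 6) : 0 ≤ NR i j k := by
  simpa [NR] using N_nonneg i j k

lemma NR_mulVec_d (i : Fin 6) : NR i *ᵥ d = d i • d := by
  ext j
  simp only [NR, mulVec, dotProduct, map_apply, Pi.smul_apply, smul_eq_mul, d_mul_d]

lemma d_vecMul_NR (i : Fin 6) : d ᵥ* NR i = d i • d := by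
  rw [NR, ← ((N_isSymm i).map Int.cast).eq, vecMul_transpose]
  exact NR_mulVec_d i

/-- The assignment `Xᵢ ↦ dᵢ` is a ring homomorphism of the fusion ring of
`C(so₅,3/2)_ad` to `ℝ`, i.e. `dᵢ dⱼ = Σ_k (Nᵢ)_{j,k} d_k`, and each `dᵢ` is the
largest (real) eigenvalue of `Nᵢ`. -/
theorem stmt19 :
    (∀ i j, d i * d j = ∑ k : Fin 6, (N i j k : ℝ) * d k) ∧
    (∀ i : Fin 6,
      (∃ v : Fin 6 → ℝ, v ≠ 0 ∧ (NR i).mulVec v = d i • v) ∧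
      ∀ μ : ℝ, (∃ v : Fin 6 → ℝ, v ≠ 0 ∧ (NR i).mulVec v = μ • v) → μ ≤ d i) := by
  refine ⟨d_mul_d, fun i => ⟨⟨d, fun h => (d_pos 0).ne' (congrFun h 0), NR_mulVec_d i⟩, ?_⟩⟩
  rintro μ ⟨v, hv, hNv⟩
  exact (le_abs_self μ).trans
    (abs_le_of_mulVec_eq_smul_of_vecMul_eq_smul (NR_nonneg i) d_pos (d_vecMul_NR i) hv hNv)
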